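/- Let Π = (p_i) be a sequence of primes tending to infinity and let Γ be a Π-graded torsion group. Then every quotient of Γ is Π-graded; in particular, every quotient of Γ is residually finite. -/

import Mathlib

open scoped commutatorElement in
/-- `D_p(K) = K^p [K,K]`: the subgroup generated by `p`-th powers and commutators of
elements of `K`, as a subgroup of the ambient group. -/
def Dverbal {Γ : Type*} [Group Γ] (p : ℕ) (K : Subgroup Γ) : Subgroup Γ :=
  Subgroup.closure ({x : Γ | ∃ k ∈ K, x = k ^ p} ∪
    {x : Γ | ∃ a ∈ K, ∃ b ∈ K, x = ⁅a, b⁆})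

/-- The series `Γ^{Π(0)} = Γ`, `Γ^{Π(n)} = D_{p_n}(Γ^{Π(n-1)})`. -/
def piSeries {Γ : Type*} [Group Γ] (P : ℕ → ℕ) : ℕ → Subgroup Γ
  | 0 => ⊤
  | n + 1 => Dverbal (P (n + 1)) (piSeries P n)

/-!
Surjections commute with `D_p`, so the `Π`-series of a quotient `Δ = π(Γ)` is the image of that
of `Γ`, and finite index passes to images. For the trivial intersection, let
`1 ≠ y ∈ ⋂ Δ^{Π(n)}` and let `q` be a prime dividing the order of `y`. Choose `n₀` with `p_n > q`
for `n > n₀`, and a preimage `g₀ ∈ Γ^{Π(n₀)}` of `y`. Raising `g₀` to the `q`-free part `r` of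
its order gives `g ∈ Γ^{Π(n₀)}` of `q`-power order with `π g = y ^ r ≠ 1` (as `q ∤ r`). Every
later `p_n` is prime to the order of `g`, and then `g ^ p_n ∈ Γ^{Π(n)}` forces `g ∈ Γ^{Π(n)}`;
so `g ∈ ⋂ Γ^{Π(n)} = 1`, a contradiction.
-/

open scoped commutatorElement

section Series

variable {Γ Δ : Type*} [Group Γ] [Group Δ]

lemma Dverbal_le (p : ℕ) (K : Subgroup Γ) : Dverbal p K ≤ K := by
  refine (Subgroup.closure_le K).mpr ?_
  rintro x (⟨k, hk, rfl⟩ | ⟨a, ha, b, hb, rfl⟩)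
  · exact pow_mem hk p
  · rw [commutatorElement_def]
    exact mul_mem (mul_mem (mul_mem ha hb) (inv_mem ha)) (inv_mem hb)

lemma pow_mem_Dverbal {p : ℕ} {K : Subgroup Γ} {k : Γ} (hk : k ∈ K) : k ^ p ∈ Dverbal p K :=
  Subgroup.subset_closure (Or.inl ⟨k, hk, rfl⟩)

lemma map_Dverbal (f : Γ →* Δ) (p : ℕ) (K : Subgroup Γ) :
    (Dverbal p K).map f = Dverbal p (K.map f) := by
  rw [Dverbal, MonoidHom.map_closure, Dverbal, Set.image_union]
  congr 2 <;> ext x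
  · simp only [Set.mem_image, Set.mem_ofPred_eq, Subgroup.mem_map]
    constructor
    · rintro ⟨_, ⟨k, hk, rfl⟩, rfl⟩
      exact ⟨f k, ⟨k, hk, rfl⟩, map_pow f k p⟩
    · rintro ⟨_, ⟨k, hk, rfl⟩, rfl⟩
      exact ⟨k ^ p, ⟨k, hk, rfl⟩, map_pow f k p⟩
  · simp only [Set.mem_image, Set.mem_ofPred_eq, Subgroup.mem_map]
    constructor
    · rintro ⟨_, ⟨a, ha, b, hb, rfl⟩, rfl⟩
      exact ⟨f a, ⟨a, ha, rfl⟩, f b, ⟨b, hb, rfl⟩, map_commutatorElement f a b⟩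
    · rintro ⟨_, ⟨a, ha, rfl⟩, _, ⟨b, hb, rfl⟩, rfl⟩
      exact ⟨⁅a, b⁆, ⟨a, ha, b, hb, rfl⟩, map_commutatorElement f a b⟩

lemma map_piSeries {f : Γ →* Δ} (hf : Function.Surjective f) (P : ℕ → ℕ) (n : ℕ) :
    (piSeries P n).map f = piSeries P n := by
  induction n with
  | zero => exact Subgroup.map_top_of_surjective f hf
  | succ n ih => exact (map_Dverbal f _ _).trans (congrArg _ ih)

lemma piSeries_antitone (P : ℕ → ℕ) : Antitone (piSeries (Γ := Γ) P) :=
  antitone_nat_of_succ_le fun n => Dverbal_le (P (n + 1)) (piSeries P n)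

lemma mem_piSeries_succ_of_coprime {P : ℕ → ℕ} {n : ℕ} {g : Γ} (hg : g ∈ piSeries P n)
    (hco : (P (n + 1)).Coprime (orderOf g)) : g ∈ piSeries P (n + 1) := by
  obtain ⟨m, hm⟩ := exists_pow_eq_self_of_coprime hco
  rw [← hm]
  exact pow_mem (pow_mem_Dverbal hg) m

lemma mem_iInf_piSeries_of_coprime {P : ℕ → ℕ} {n₀ : ℕ} {g : Γ} (hg : g ∈ piSeries P n₀)
    (hco : ∀ n ≥ n₀, (P (n + 1)).Coprime (orderOf g)) : g ∈ ⨅ n, piSeries P n := by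
  refine Subgroup.mem_iInf.mpr fun n => ?_
  rcases le_total n n₀ with hn | hn
  · exact piSeries_antitone P hn hg
  · induction n, hn using Nat.le_induction with
    | base => exact hg
    | succ n hn ih => exact mem_piSeries_succ_of_coprime ih (hco n hn)

end Series

lemma orderOf_pow_ordCompl_dvd {G : Type*} [Monoid G] (g : G) (q : ℕ) :
    orderOf (g ^ ordCompl[q] (orderOf g)) ∣ q ^ (orderOf g).factorization q := by
  refine orderOf_dvd_of_pow_eq_one ?_
  rw [← pow_mul, mul_comm, Nat.ordProj_mul_ordCompl_eq_self, pow_orderOf_eq_one]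

lemma Subgroup.FiniteIndex.map_of_surjective {G G' : Type*} [Group G] [Group G'] {H : Subgroup G}
    [H.FiniteIndex] {f : G →* G'} (hf : Function.Surjective f) : (H.map f).FiniteIndex :=
  ⟨ne_zero_of_dvd_ne_zero FiniteIndex.index_ne_zero (H.index_map_dvd hf)⟩

lemma Subgroup.exists_normal_finiteIndex_notMem {G ι : Type*} [Group G] (H : ι → Subgroup G)
    [∀ i, (H i).FiniteIndex] (hH : ⨅ i, H i = ⊥) {g : G} (hg : g ≠ 1) :
    ∃ N : Subgroup G, N.Normal ∧ N.FiniteIndex ∧ g ∉ N := by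
  obtain ⟨i, hi⟩ : ∃ i, g ∉ H i := by
    by_contra! h
    exact hg (by rwa [← Subgroup.mem_bot, ← hH, Subgroup.mem_iInf])
  exact ⟨(H i).normalCore, inferInstance, inferInstance, fun h => hi ((H i).normalCore_le h)⟩

lemma iInf_piSeries_eq_bot_of_surjective {Γ Δ : Type*} [Group Γ] [Group Δ] {P : ℕ → ℕ}
    (hP : ∀ i, (P i).Prime) (hPinf : Filter.Tendsto P Filter.atTop Filter.atTop)
    (htorsion : ∀ g : Γ, IsOfFinOrder g) (hres : ⨅ n, piSeries (Γ := Γ) P n = ⊥)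
    {π : Γ →* Δ} (hπ : Function.Surjective π) : ⨅ n, piSeries (Γ := Δ) P n = ⊥ := by
  refine (Subgroup.eq_bot_iff_forall _).mpr fun y hy => ?_
  by_contra hy1
  set q := (orderOf y).minFac
  have hq : q.Prime := Nat.minFac_prime (mt orderOf_eq_one_iff.mp hy1)
  obtain ⟨n₀, hn₀⟩ := Filter.eventually_atTop.mp (hPinf.eventually_gt_atTop q)
  obtain ⟨g₀, hg₀, rfl⟩ : y ∈ (piSeries P n₀).map π := by
    rw [map_piSeries hπ]
    exact Subgroup.mem_iInf.mp hy n₀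
  set r := ordCompl[q] (orderOf g₀)
  have hcoprime : ∀ n ≥ n₀, (P (n + 1)).Coprime (orderOf (g₀ ^ r)) := fun n hn =>
    have hne : P (n + 1) ≠ q := (hn₀ (n + 1) (by omega)).ne'
    (((Nat.coprime_primes (hP _) hq).mpr hne).pow_right _).coprime_dvd_right
      (orderOf_pow_ordCompl_dvd g₀ q)
  have hg : g₀ ^ r = 1 := by
    rw [← Subgroup.mem_bot, ← hres]
    exact mem_iInf_piSeries_of_coprime (pow_mem hg₀ r) hcoprime
  have hqr : q ∣ r :=
    (Nat.minFac_dvd _).trans (orderOf_dvd_of_pow_eq_one (by rw [← map_pow, hg, map_one]))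
  exact hq.coprime_iff_not_dvd.mp (Nat.coprime_ordCompl hq (htorsion g₀).orderOf_pos.ne') hqr

/-- If `Π` is a sequence of primes tending to infinity and `Γ` is a
`Π`-graded torsion group, then every quotient of `Γ` is `Π`-graded; in particular every
quotient of `Γ` is residually finite. -/
theorem statement5 {Γ : Type*} [Group Γ] (P : ℕ → ℕ)
    (hP : ∀ i, (P i).Prime)
    (hPinf : Filter.Tendsto P Filter.atTop Filter.atTop)
    (htorsion : ∀ g : Γ, IsOfFinOrder g)
    (hfin : ∀ n, (piSeries (Γ := Γ) P n).FiniteIndex)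
    (hres : ⨅ n, piSeries (Γ := Γ) P n = ⊥)
    (Δ : Type*) [Group Δ] (π : Γ →* Δ) (hπ : Function.Surjective π) :
    ((∀ n, (piSeries (Γ := Δ) P n).FiniteIndex) ∧ ⨅ n, piSeries (Γ := Δ) P n = ⊥) ∧
      (∀ g : Δ, g ≠ 1 → ∃ N : Subgroup Δ, N.Normal ∧ N.FiniteIndex ∧ g ∉ N) := by
  have hfinΔ (n : ℕ) : (piSeries (Γ := Δ) P n).FiniteIndex :=
    map_piSeries hπ P n ▸ Subgroup.FiniteIndex.map_of_surjective hπ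
  have hresΔ := iInf_piSeries_eq_bot_of_surjective hP hPinf htorsion hres hπ
  exact ⟨⟨hfinΔ, hresΔ⟩, fun g hg => Subgroup.exists_normal_finiteIndex_notMem _ hresΔ hg⟩
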